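/- arXiv:2412.04794 — 6 statements merged into one kernel-verified Lean document; each statement's English description precedes it below -/
import Mathlib

section
/- Let $r,s$ be real numbers with $0 \le r < 1 < s$, let $A > 0$, $B > 0$, $\mu > 0$, and let $C \le 0$. Define $G(t) = A t^{1-r} - B t^{s-r}$, $t_0 = ((1-r)A/((s-r)B))^{1/(s-1)}$, and $F(t) = \frac{t^2}{2}A - \frac{\mu t^{r+1}}{r+1}C - \frac{t^{s+1}}{s+1}B$ for $t \ge 0$. Then there exists a unique $t^- \in (0,\infty)$ such that $G(t^-) = \mu C$; moreover $t^- > t_0$, $F'(t^-) = 0$, $F''(t^-) < 0$, and $F(t^-) = \sup_{t \ge 0} F(t)$. -/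
/-!
Write `F'(t) = t ^ r * (G t - μ C)`. Since
`G'(t) = t ^ (-r) * ((1 - r) A - (s - r) B t ^ (s - 1))`, `G` increases strictly from `G 0 = 0`
up to its peak at `t₀` and then decreases strictly to `-∞`.
A level `μ C ≤ 0` lies below the positive peak value, so it is attained exactly once, at some
`t⁻ > t₀`; `F'` is positive before `t⁻` and negative after it, so `t⁻` maximises `F`, and
`F''(t⁻) = (t⁻) ^ r * G'(t⁻) < 0` because `t⁻` lies past the peak.
-/

open Filter Set Topology

noncomputable def fiberingG (r s A B t : ℝ) : ℝ := A * t ^ (1 - r) - B * t ^ (s - r)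

noncomputable def fiberingPeak (r s A B : ℝ) : ℝ :=
  ((1 - r) * A / ((s - r) * B)) ^ (1 / (s - 1))

noncomputable def fiberingF (r s A B μ C t : ℝ) : ℝ :=
  t ^ (2 : ℝ) / 2 * A - μ * t ^ (r + 1) / (r + 1) * C - t ^ (s + 1) / (s + 1) * B

section

variable {r s A B : ℝ}

theorem fiberingG_zero (hr : r < 1) (hs : 1 < s) : fiberingG r s A B 0 = 0 := by
  simp [fiberingG, Real.zero_rpow (by linarith : 1 - r ≠ 0),
    Real.zero_rpow (by linarith : s - r ≠ 0)]

theorem continuous_fiberingG (hr : r < 1) (hs : 1 < s) : Continuous (fiberingG r s A B) :=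
  (continuous_const.mul (Real.continuous_rpow_const (by linarith))).sub
    (continuous_const.mul (Real.continuous_rpow_const (by linarith)))

theorem fiberingG_eq_mul {t : ℝ} (ht : 0 < t) :
    fiberingG r s A B t = t ^ (1 - r) * (A - B * t ^ (s - 1)) := by
  rw [fiberingG, show s - r = 1 - r + (s - 1) by ring, Real.rpow_add ht]
  ring

theorem hasDerivAt_fiberingG {t : ℝ} (ht : 0 < t) :
    HasDerivAt (fiberingG r s A B) (t ^ (-r) * ((1 - r) * A - (s - r) * B * t ^ (s - 1))) t := by
  have hA := (Real.hasDerivAt_rpow_const (p := 1 - r) (Or.inl ht.ne')).const_mul A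
  have hB := (Real.hasDerivAt_rpow_const (p := s - r) (Or.inl ht.ne')).const_mul B
  refine (hA.sub hB).congr_deriv ?_
  rw [show 1 - r - 1 = -r by ring, show s - r - 1 = -r + (s - 1) by ring, Real.rpow_add ht]
  ring

theorem tendsto_fiberingG_atTop (hr : r < 1) (hs : 1 < s) (hB : 0 < B) :
    Tendsto (fiberingG r s A B) atTop atBot := by
  have hψ : Tendsto (fun t : ℝ => A + -(B * t ^ (s - 1))) atTop atBot :=
    tendsto_atBot_add_const_left _ A <| tendsto_neg_atTop_atBot.comp <|
      (tendsto_rpow_atTop (y := s - 1) (by linarith)).const_mul_atTop hB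
  refine ((tendsto_rpow_atTop (y := 1 - r) (by linarith)).atTop_mul_atBot₀ hψ).congr' ?_
  filter_upwards [eventually_gt_atTop 0] with t ht
  rw [fiberingG_eq_mul ht]
  ring

theorem fiberingPeak_pos (hr : r < 1) (hs : 1 < s) (hA : 0 < A) (hB : 0 < B) :
    0 < fiberingPeak r s A B :=
  Real.rpow_pos_of_pos (div_pos (by nlinarith) (by nlinarith)) _

theorem lt_fiberingPeak_iff (hr : r < 1) (hs : 1 < s) (hA : 0 < A) (hB : 0 < B) {t : ℝ}
    (ht : 0 ≤ t) : t < fiberingPeak r s A B ↔ (s - r) * B * t ^ (s - 1) < (1 - r) * A := by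
  rw [fiberingPeak, one_div,
    Real.lt_rpow_inv_iff_of_pos ht (div_pos (by nlinarith) (by nlinarith)).le (by linarith),
    lt_div_iff₀ (by nlinarith)]
  constructor <;> intro h <;> linarith

theorem fiberingPeak_lt_iff (hr : r < 1) (hs : 1 < s) (hA : 0 < A) (hB : 0 < B) {t : ℝ}
    (ht : 0 ≤ t) : fiberingPeak r s A B < t ↔ (1 - r) * A < (s - r) * B * t ^ (s - 1) := by
  rw [fiberingPeak, one_div,
    Real.rpow_inv_lt_iff_of_pos (div_pos (by nlinarith) (by nlinarith)).le ht (by linarith),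
    div_lt_iff₀ (by nlinarith)]
  constructor <;> intro h <;> linarith

theorem strictMonoOn_fiberingG (hr : r < 1) (hs : 1 < s) (hA : 0 < A) (hB : 0 < B) :
    StrictMonoOn (fiberingG r s A B) (Icc 0 (fiberingPeak r s A B)) := by
  refine strictMonoOn_of_deriv_pos (convex_Icc _ _) (continuous_fiberingG hr hs).continuousOn ?_
  rw [interior_Icc]
  rintro t ⟨ht0, htp⟩
  rw [(hasDerivAt_fiberingG ht0).deriv]
  exact mul_pos (Real.rpow_pos_of_pos ht0 _)
    (sub_pos.2 ((lt_fiberingPeak_iff hr hs hA hB ht0.le).1 htp))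

theorem strictAntiOn_fiberingG (hr : r < 1) (hs : 1 < s) (hA : 0 < A) (hB : 0 < B) :
    StrictAntiOn (fiberingG r s A B) (Ici (fiberingPeak r s A B)) := by
  refine strictAntiOn_of_deriv_neg (convex_Ici _) (continuous_fiberingG hr hs).continuousOn ?_
  intro t ht
  rw [interior_Ici] at ht
  have ht0 : 0 < t := (fiberingPeak_pos hr hs hA hB).trans ht
  rw [(hasDerivAt_fiberingG ht0).deriv]
  exact mul_neg_of_pos_of_neg (Real.rpow_pos_of_pos ht0 _)
    (sub_neg.2 ((fiberingPeak_lt_iff hr hs hA hB ht0.le).1 ht))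

theorem exists_fiberingG_eq_of_nonpos (hr : r < 1) (hs : 1 < s) (hA : 0 < A) (hB : 0 < B) {c : ℝ}
    (hc : c ≤ 0) : ∃ tm, fiberingPeak r s A B < tm ∧ fiberingG r s A B tm = c ∧
      (∀ t ∈ Ioo 0 tm, c < fiberingG r s A B t) ∧
      ∀ t ∈ Ioi tm, fiberingG r s A B t < c := by
  set G := fiberingG r s A B
  set t₀ := fiberingPeak r s A B
  have ht₀ : 0 < t₀ := fiberingPeak_pos hr hs hA hB
  have hinc := strictMonoOn_fiberingG hr hs hA hB
  have hdec := strictAntiOn_fiberingG hr hs hA hB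
  have hpos : ∀ t ∈ Ioc 0 t₀, 0 < G t := fun t ht =>
    fiberingG_zero (A := A) (B := B) hr hs ▸ hinc ⟨le_rfl, ht₀.le⟩ ⟨ht.1.le, ht.2⟩ ht.1
  obtain ⟨T, hGT, hT⟩ :=
    ((tendsto_fiberingG_atTop hr hs hB).eventually_le_atBot c).and
      (eventually_gt_atTop t₀) |>.exists
  obtain ⟨tm, ⟨htm₀, -⟩, hroot⟩ :=
    intermediate_value_Icc' hT.le (continuous_fiberingG hr hs).continuousOn
      ⟨hGT, hc.trans (hpos t₀ ⟨ht₀, le_rfl⟩).le⟩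
  have hpeak : t₀ < tm := htm₀.lt_of_ne <| by
    rintro rfl
    exact (hpos t₀ ⟨ht₀, le_rfl⟩).not_ge (hroot.le.trans hc)
  refine ⟨tm, hpeak, hroot, fun t ht => ?_, fun t ht => ?_⟩
  · rcases le_or_gt t t₀ with h | h
    · exact hc.trans_lt (hpos t ⟨ht.1, h⟩)
    · exact hroot ▸ hdec h.le hpeak.le ht.2
  · exact hroot ▸ hdec hpeak.le (hpeak.trans ht).le ht

end

theorem hasDerivAt_rpow_add_one_div {p : ℝ} (hp : 0 ≤ p) (t : ℝ) :
    HasDerivAt (fun t => t ^ (p + 1) / (p + 1)) (t ^ p) t := by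
  refine ((Real.hasDerivAt_rpow_const (Or.inr (by linarith : 1 ≤ p + 1))).div_const
    (p + 1)).congr_deriv ?_
  rw [add_sub_cancel_right, mul_div_cancel_left₀ _ (by linarith)]

section

variable {r s A B μ C : ℝ}

theorem hasDerivAt_fiberingF (hr : 0 ≤ r) (hs : 0 ≤ s) (t : ℝ) :
    HasDerivAt (fiberingF r s A B μ C) (t * A - μ * t ^ r * C - t ^ s * B) t := by
  have hF := (((hasDerivAt_rpow_add_one_div zero_le_one t).mul_const A).sub
    (((hasDerivAt_rpow_add_one_div hr t).const_mul μ).mul_const C)).sub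
    ((hasDerivAt_rpow_add_one_div hs t).mul_const B)
  refine (hF.congr_deriv (by rw [Real.rpow_one])).congr_of_eventuallyEq
    (Eventually.of_forall fun t => ?_)
  simp only [fiberingF, one_add_one_eq_two, Pi.sub_apply]
  ring

theorem deriv_fiberingF_eq {t : ℝ} (hr : 0 ≤ r) (hs : 0 ≤ s) (ht : 0 < t) :
    deriv (fiberingF r s A B μ C) t = t ^ r * (fiberingG r s A B t - μ * C) := by
  have h1 : t ^ r * t ^ (1 - r) = t := by rw [← Real.rpow_add ht, add_sub_cancel, Real.rpow_one]
  have h2 : t ^ r * t ^ (s - r) = t ^ s := by rw [← Real.rpow_add ht, add_sub_cancel]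
  rw [(hasDerivAt_fiberingF hr hs t).deriv, fiberingG]
  linear_combination B * h2 - A * h1

theorem deriv_deriv_fiberingF_neg (hr0 : 0 ≤ r) (hr1 : r < 1) (hs : 1 < s) (hA : 0 < A)
    (hB : 0 < B) {tm : ℝ} (hpeak : fiberingPeak r s A B < tm)
    (hroot : fiberingG r s A B tm = μ * C) : deriv (deriv (fiberingF r s A B μ C)) tm < 0 := by
  have htm : 0 < tm := (fiberingPeak_pos hr1 hs hA hB).trans hpeak
  have hF' : deriv (fiberingF r s A B μ C) =ᶠ[𝓝 tm]
      fun t => t ^ r * (fiberingG r s A B t - μ * C) := by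
    filter_upwards [Ioi_mem_nhds htm] with t ht
    exact deriv_fiberingF_eq hr0 (by linarith) ht
  have hF'' : HasDerivAt (fun t => t ^ r * (fiberingG r s A B t - μ * C))
      (tm ^ r * (tm ^ (-r) * ((1 - r) * A - (s - r) * B * tm ^ (s - 1)))) tm :=
    ((Real.hasDerivAt_rpow_const (Or.inl htm.ne')).mul
      ((hasDerivAt_fiberingG htm).sub_const (μ * C))).congr_deriv
      (by rw [hroot, sub_self, mul_zero, zero_add])
  rw [hF'.deriv_eq, hF''.deriv]
  exact mul_neg_of_pos_of_neg (Real.rpow_pos_of_pos htm _) <| mul_neg_of_pos_of_neg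
    (Real.rpow_pos_of_pos htm _) (sub_neg.2 ((fiberingPeak_lt_iff hr1 hs hA hB htm.le).1 hpeak))

end

theorem isGreatest_image_Ici_of_deriv {F : ℝ → ℝ} {a m : ℝ} (ham : a ≤ m)
    (hF : Differentiable ℝ F) (hinc : ∀ t ∈ Ioo a m, 0 ≤ deriv F t)
    (hdec : ∀ t ∈ Ioi m, deriv F t ≤ 0) : IsGreatest (F '' Ici a) (F m) := by
  have hmono : MonotoneOn F (Icc a m) :=
    monotoneOn_of_deriv_nonneg (convex_Icc a m) hF.continuous.continuousOn hF.differentiableOn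
      (by simpa only [interior_Icc] using hinc)
  have hanti : AntitoneOn F (Ici m) :=
    antitoneOn_of_deriv_nonpos (convex_Ici m) hF.continuous.continuousOn hF.differentiableOn
      (by simpa only [interior_Ici] using hdec)
  refine ⟨mem_image_of_mem F ham, ?_⟩
  rintro _ ⟨t, ht, rfl⟩
  rcases le_total t m with h | h
  · exact hmono ⟨ht, h⟩ ⟨ham, le_rfl⟩ h
  · exact hanti self_mem_Ici h h

/-- Lemma 4(a) (Lemma Char(a)), fibering-map form: if `C ≤ 0` there is a unique
`t⁻ > 0` with `G t⁻ = μ C`; it satisfies `t⁻ > t₀`, `F'(t⁻) = 0`, `F''(t⁻) < 0`,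
and `F(t⁻) = sup_{t ≥ 0} F(t)`. -/
theorem stmt_2 (r s A B μ C : ℝ) (hr0 : 0 ≤ r) (hr1 : r < 1) (hs : 1 < s)
    (hA : 0 < A) (hB : 0 < B) (hμ : 0 < μ) (hC : C ≤ 0)
    (G : ℝ → ℝ) (hG : ∀ t : ℝ, G t = A * t ^ (1 - r) - B * t ^ (s - r))
    (t₀ : ℝ) (ht₀ : t₀ = ((1 - r) * A / ((s - r) * B)) ^ (1 / (s - 1)))
    (F : ℝ → ℝ)
    (hF : ∀ t : ℝ, F t = t ^ (2 : ℝ) / 2 * A - μ * t ^ (r + 1) / (r + 1) * C -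
      t ^ (s + 1) / (s + 1) * B) :
    ∃ tm : ℝ, 0 < tm ∧ G tm = μ * C ∧
      (∀ t : ℝ, 0 < t → G t = μ * C → t = tm) ∧
      t₀ < tm ∧ deriv F tm = 0 ∧ deriv (deriv F) tm < 0 ∧
      IsGreatest (F '' Set.Ici 0) (F tm) := by
  obtain rfl : G = fiberingG r s A B := funext hG
  obtain rfl : F = fiberingF r s A B μ C := funext hF
  obtain rfl : t₀ = fiberingPeak r s A B := ht₀
  have hF' : ∀ t, 0 < t →
      deriv (fiberingF r s A B μ C) t = t ^ r * (fiberingG r s A B t - μ * C) :=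
    fun t ht => deriv_fiberingF_eq hr0 (by linarith) ht
  obtain ⟨tm, hpeak, hroot, hbelow, habove⟩ :=
    exists_fiberingG_eq_of_nonpos hr1 hs hA hB (mul_nonpos_of_nonneg_of_nonpos hμ.le hC)
  have htm : 0 < tm := (fiberingPeak_pos hr1 hs hA hB).trans hpeak
  refine ⟨tm, htm, hroot, fun t ht hGt => ?_, hpeak,
    by rw [hF' tm htm, hroot, sub_self, mul_zero],
    deriv_deriv_fiberingF_neg hr0 hr1 hs hA hB hpeak hroot,
    isGreatest_image_Ici_of_deriv htm.le
      (fun t => (hasDerivAt_fiberingF hr0 (by linarith) t).differentiableAt) (fun t ht => ?_)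
      (fun t ht => ?_)⟩
  · by_contra hne
    rcases lt_or_gt_of_ne hne with h | h
    · exact (hbelow t ⟨ht, h⟩).ne' hGt
    · exact (habove t h).ne hGt
  · rw [hF' t ht.1]
    exact mul_nonneg (Real.rpow_nonneg ht.1.le _) (sub_nonneg.2 (hbelow t ht).le)
  · rw [hF' t (htm.trans ht)]
    exact mul_nonpos_of_nonneg_of_nonpos (Real.rpow_nonneg (htm.trans ht).le _)
      (sub_nonpos.2 (habove t ht).le)
end

section
/- Let $r,s$ be real numbers with $0 \le r < 1 < s$, let $A > 0$, $B > 0$, $\mu > 0$, and let $C$ be a real number such that $0 < \mu C < G(t_0)$, where $G(t) = A t^{1-r} - B t^{s-r}$ and $t_0 = ((1-r)A/((s-r)B))^{1/(s-1)}$. Then there exist exactly two solutions $t^+, t^-$ of the equation $G(t) = \mu C$ in $(0,\infty)$; they satisfy $0 < t^+ < t_0 < t^-$, $G'(t^+) > 0$, $G'(t^-) < 0$, and, for $F(t) = \frac{t^2}{2}A - \frac{\mu t^{r+1}}{r+1}C - \frac{t^{s+1}}{s+1}B$, one has $F'(t^+) = F'(t^-) = 0$, $F''(t^+) > 0$ and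 $F''(t^-) < 0$. -/
/-!
`G' t = t^(-r) ((1-r)A - (s-r)B t^(s-1))`, whose bracket changes sign exactly once, at `t₀`:
`G` rises strictly from `G 0 = 0` to its maximum `G t₀` and then falls strictly to `-∞`. Hence
every level in `(0, G t₀)` is hit exactly once on each side of `t₀`. Since
`F' t = t^r (G t - μC)`, at a solution `F'' t = t^r G' t`, so `F''` has the sign of `G'`.
-/

open Set Filter Topology

theorem sub_mul_rpow_pos_iff {a b p t : ℝ} (ha : 0 ≤ a) (hb : 0 < b) (hp : 0 < p)
    (ht : 0 ≤ t) :
    0 < a - b * t ^ p ↔ t < (a / b) ^ (1 / p) := by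
  rw [one_div, Real.lt_rpow_inv_iff_of_pos ht (by positivity) hp, lt_div_iff₀ hb, sub_pos,
    mul_comm]

theorem sub_mul_rpow_neg_iff {a b p t : ℝ} (ha : 0 ≤ a) (hb : 0 < b) (hp : 0 < p)
    (ht : 0 ≤ t) :
    a - b * t ^ p < 0 ↔ (a / b) ^ (1 / p) < t := by
  rw [one_div, Real.rpow_inv_lt_iff_of_pos (by positivity) ht hp, div_lt_iff₀ hb, sub_neg,
    mul_comm]

namespace GrushinFibering

noncomputable def G (A B r s t : ℝ) : ℝ := A * t ^ (1 - r) - B * t ^ (s - r)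

noncomputable def F (A B C μ r s t : ℝ) : ℝ :=
  t ^ (2 : ℝ) / 2 * A - μ * t ^ (r + 1) / (r + 1) * C - t ^ (s + 1) / (s + 1) * B

noncomputable def maxPoint (A B r s : ℝ) : ℝ := ((1 - r) * A / ((s - r) * B)) ^ (1 / (s - 1))

variable {A B r s : ℝ}

theorem G_zero (hr : r < 1) (hrs : r < s) : G A B r s 0 = 0 := by
  simp [G, Real.zero_rpow (sub_ne_zero.2 hr.ne'), Real.zero_rpow (sub_ne_zero.2 hrs.ne')]

theorem G_eq_rpow_mul {t : ℝ} (ht : 0 < t) :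
    G A B r s t = t ^ (1 - r) * (A - B * t ^ (s - 1)) := by
  have h : t ^ (s - r) = t ^ (1 - r) * t ^ (s - 1) := by
    rw [← Real.rpow_add ht]; ring_nf
  rw [G, h]; ring

theorem hasDerivAt_G {t : ℝ} (ht : 0 < t) :
    HasDerivAt (G A B r s) (t ^ (-r) * ((1 - r) * A - (s - r) * B * t ^ (s - 1))) t := by
  have h := ((Real.hasDerivAt_rpow_const (p := 1 - r) (Or.inl ht.ne')).const_mul A).sub
    ((Real.hasDerivAt_rpow_const (p := s - r) (Or.inl ht.ne')).const_mul B)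
  refine h.congr_deriv ?_
  have h₁ : t ^ (1 - r - 1) = t ^ (-r) := by ring_nf
  have h₂ : t ^ (s - r - 1) = t ^ (-r) * t ^ (s - 1) := by
    rw [← Real.rpow_add ht]; ring_nf
  rw [h₁, h₂]; ring

theorem continuousOn_G (hr : r ≤ 1) (hrs : r ≤ s) : ContinuousOn (G A B r s) (Ici 0) := by
  have hpow : ∀ p : ℝ, 0 ≤ p → Continuous fun t : ℝ => t ^ p := fun p hp =>
    continuous_iff_continuousAt.2 fun t => Real.continuousAt_rpow_const t p (Or.inr hp)
  exact ((continuous_const.mul (hpow _ (sub_nonneg.2 hr))).sub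
    (continuous_const.mul (hpow _ (sub_nonneg.2 hrs)))).continuousOn

theorem G_neg_of_lt (hA : 0 < A) (hB : 0 < B) (hs : 1 < s) {t : ℝ}
    (ht : (A / B) ^ (1 / (s - 1)) < t) : G A B r s t < 0 := by
  have ht0 : 0 < t := (Real.rpow_nonneg (div_nonneg hA.le hB.le) _).trans_lt ht
  rw [G_eq_rpow_mul ht0]
  exact mul_neg_of_pos_of_neg (by positivity)
    ((sub_mul_rpow_neg_iff hA.le hB (by linarith) ht0.le).2 ht)

variable (hA : 0 < A) (hB : 0 < B) (hr : r < 1) (hs : 1 < s)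
include hA hB hr hs

theorem deriv_G_pos {t : ℝ} (ht : 0 < t) (htt₀ : t < maxPoint A B r s) :
    0 < deriv (G A B r s) t := by
  rw [(hasDerivAt_G ht).deriv]
  exact mul_pos (by positivity) ((sub_mul_rpow_pos_iff (by nlinarith) (by nlinarith)
    (by linarith) ht.le).2 htt₀)

theorem deriv_G_neg {t : ℝ} (ht : 0 < t) (htt₀ : maxPoint A B r s < t) :
    deriv (G A B r s) t < 0 := by
  rw [(hasDerivAt_G ht).deriv]
  exact mul_neg_of_pos_of_neg (by positivity) ((sub_mul_rpow_neg_iff (by nlinarith)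
    (by nlinarith) (by linarith) ht.le).2 htt₀)

theorem maxPoint_pos : 0 < maxPoint A B r s := by
  have : 0 < (1 - r) * A / ((s - r) * B) := by
    apply div_pos <;> apply mul_pos <;> linarith
  exact Real.rpow_pos_of_pos this _

theorem strictMonoOn_G : StrictMonoOn (G A B r s) (Icc 0 (maxPoint A B r s)) := by
  refine strictMonoOn_of_deriv_pos (convex_Icc _ _)
    ((continuousOn_G hr.le (by linarith)).mono Icc_subset_Ici_self) fun t ht => ?_
  rw [interior_Icc] at ht
  exact deriv_G_pos hA hB hr hs ht.1 ht.2

theorem strictAntiOn_G : StrictAntiOn (G A B r s) (Ici (maxPoint A B r s)) := by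
  have ht₀ := maxPoint_pos hA hB hr hs
  refine strictAntiOn_of_deriv_neg (convex_Ici _)
    ((continuousOn_G hr.le (by linarith)).mono (Ici_subset_Ici.2 ht₀.le)) fun t ht => ?_
  rw [interior_Ici] at ht
  exact deriv_G_neg hA hB hr hs (ht₀.trans ht) ht

theorem exists_G_eq_of_lt_maxPoint {c : ℝ} (hc0 : 0 < c)
    (hc : c < G A B r s (maxPoint A B r s)) :
    ∃ t ∈ Ioo 0 (maxPoint A B r s), G A B r s t = c := by
  have hcont : ContinuousOn (G A B r s) (Icc 0 (maxPoint A B r s)) :=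
    (continuousOn_G hr.le (by linarith)).mono Icc_subset_Ici_self
  refine intermediate_value_Ioo (maxPoint_pos hA hB hr hs).le hcont ?_
  rwa [G_zero hr (by linarith), mem_Ioo, and_iff_right hc0]

theorem exists_G_eq_of_maxPoint_lt {c : ℝ} (hc0 : 0 ≤ c)
    (hc : c < G A B r s (maxPoint A B r s)) :
    ∃ t, maxPoint A B r s < t ∧ G A B r s t = c := by
  obtain ⟨T, hT, hTA⟩ := ((eventually_gt_atTop (maxPoint A B r s)).and
    (eventually_gt_atTop ((A / B) ^ (1 / (s - 1))))).exists
  have hGT : G A B r s T < 0 := G_neg_of_lt hA hB hs hTA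
  have hcont : ContinuousOn (G A B r s) (Icc (maxPoint A B r s) T) :=
    (continuousOn_G hr.le (by linarith)).mono
      fun t ht => (maxPoint_pos hA hB hr hs).le.trans ht.1
  obtain ⟨t, ht, hGt⟩ := intermediate_value_Ioo' hT.le hcont ⟨hGT.trans_le hc0, hc⟩
  exact ⟨t, ht.1, hGt⟩

theorem eq_or_eq_of_G_eq {t tp tm : ℝ} (ht : 0 ≤ t) (htp : tp ∈ Icc 0 (maxPoint A B r s))
    (htm : maxPoint A B r s ≤ tm) (hp : G A B r s t = G A B r s tp)
    (hm : G A B r s t = G A B r s tm) : t = tp ∨ t = tm := by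
  rcases le_total t (maxPoint A B r s) with h | h
  · exact .inl (strictMonoOn_G hA hB hr hs |>.injOn ⟨ht, h⟩ htp hp)
  · exact .inr (strictAntiOn_G hA hB hr hs |>.injOn h htm hm)

omit hA hB hr hs

variable {C μ : ℝ}

theorem hasDerivAt_F (hr : r + 1 ≠ 0) (hs : s + 1 ≠ 0) {t : ℝ} (ht : 0 < t) :
    HasDerivAt (F A B C μ r s) (t ^ r * (G A B r s t - μ * C)) t := by
  have hpow (p : ℝ) := Real.hasDerivAt_rpow_const (x := t) (p := p) (Or.inl ht.ne')
  have h := ((((hpow 2).div_const 2).mul_const A).sub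
    ((((hpow (r + 1)).const_mul μ).div_const (r + 1)).mul_const C)).sub
    (((hpow (s + 1)).div_const (s + 1)).mul_const B)
  refine h.congr_deriv ?_
  have h₁ : t ^ (1 - r) * t ^ r = t ^ ((2 : ℝ) - 1) := by rw [← Real.rpow_add ht]; ring_nf
  have h₂ : t ^ (s - r) * t ^ r = t ^ (s + 1 - 1) := by rw [← Real.rpow_add ht]; ring_nf
  rw [G, add_sub_cancel_right, ← h₁, ← h₂]
  field_simp
  ring

theorem deriv_deriv_F_of_G_eq (hr : r + 1 ≠ 0) (hs : s + 1 ≠ 0) {t : ℝ} (ht : 0 < t)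
    (hGt : G A B r s t = μ * C) :
    deriv (deriv (F A B C μ r s)) t = t ^ r * deriv (G A B r s) t := by
  have hF' : deriv (F A B C μ r s) =ᶠ[𝓝 t] fun x => x ^ r * (G A B r s x - μ * C) :=
    eventually_of_mem (Ioi_mem_nhds ht) fun x hx => (hasDerivAt_F hr hs hx).deriv
  have hG := hasDerivAt_G (A := A) (B := B) (r := r) (s := s) ht
  have h := (Real.hasDerivAt_rpow_const (p := r) (Or.inl ht.ne')).mul (hG.sub_const (μ * C))
  rw [(h.congr_of_eventuallyEq hF').deriv, hG.deriv, hGt, sub_self, mul_zero, zero_add]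

end GrushinFibering

open GrushinFibering in
theorem stmt_5_general (r s A B μ C : ℝ) (hr0 : 0 ≤ r) (hr1 : r < 1) (hs : 1 < s)
    (hA : 0 < A) (hB : 0 < B)
    (G : ℝ → ℝ) (hG : ∀ t : ℝ, G t = A * t ^ (1 - r) - B * t ^ (s - r))
    (t₀ : ℝ) (ht₀ : t₀ = ((1 - r) * A / ((s - r) * B)) ^ (1 / (s - 1)))
    (hC0 : 0 < μ * C) (hCG : μ * C < G t₀)
    (F : ℝ → ℝ)
    (hF : ∀ t : ℝ, F t = t ^ (2 : ℝ) / 2 * A - μ * t ^ (r + 1) / (r + 1) * C -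
      t ^ (s + 1) / (s + 1) * B) :
    ∃ tp tm : ℝ, 0 < tp ∧ tp < t₀ ∧ t₀ < tm ∧
      G tp = μ * C ∧ G tm = μ * C ∧
      (∀ t : ℝ, 0 < t → G t = μ * C → t = tp ∨ t = tm) ∧
      0 < deriv G tp ∧ deriv G tm < 0 ∧
      deriv F tp = 0 ∧ deriv F tm = 0 ∧
      0 < deriv (deriv F) tp ∧ deriv (deriv F) tm < 0 := by
  obtain rfl : G = GrushinFibering.G A B r s := funext hG
  obtain rfl : F = GrushinFibering.F A B C μ r s := funext hF
  obtain rfl : t₀ = maxPoint A B r s := ht₀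
  have hr' : r + 1 ≠ 0 := by linarith
  have hs' : s + 1 ≠ 0 := by linarith
  obtain ⟨tp, ⟨htp0, htp⟩, hGtp⟩ := exists_G_eq_of_lt_maxPoint hA hB hr1 hs hC0 hCG
  obtain ⟨tm, htm, hGtm⟩ := exists_G_eq_of_maxPoint_lt hA hB hr1 hs hC0.le hCG
  have htm0 : 0 < tm := (maxPoint_pos hA hB hr1 hs).trans htm
  have hF' {t : ℝ} (ht : 0 < t) (hGt : G A B r s t = μ * C) :
      deriv (F A B C μ r s) t = 0 := by
    rw [(hasDerivAt_F hr' hs' ht).deriv, hGt, sub_self, mul_zero]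
  refine ⟨tp, tm, htp0, htp, htm, hGtp, hGtm, fun t ht hGt => ?_,
    deriv_G_pos hA hB hr1 hs htp0 htp, deriv_G_neg hA hB hr1 hs htm0 htm,
    hF' htp0 hGtp, hF' htm0 hGtm, ?_, ?_⟩
  · exact eq_or_eq_of_G_eq hA hB hr1 hs ht.le ⟨htp0.le, htp.le⟩ htm.le
      (hGt.trans hGtp.symm) (hGt.trans hGtm.symm)
  · rw [deriv_deriv_F_of_G_eq hr' hs' htp0 hGtp]
    exact mul_pos (by positivity) (deriv_G_pos hA hB hr1 hs htp0 htp)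
  · rw [deriv_deriv_F_of_G_eq hr' hs' htm0 hGtm]
    exact mul_neg_of_pos_of_neg (by positivity) (deriv_G_neg hA hB hr1 hs htm0 htm)

/-- Lemma 4(b) (Lemma Char(b)), existence/uniqueness part: if `0 < μC < G(t₀)`, the
equation `G t = μC` has exactly two positive solutions `t⁺ < t₀ < t⁻`, with
`G'(t⁺) > 0`, `G'(t⁻) < 0`, `F'(t⁺) = F'(t⁻) = 0`, `F''(t⁺) > 0`, `F''(t⁻) < 0`. -/
theorem stmt_5 (r s A B μ C : ℝ) (hr0 : 0 ≤ r) (hr1 : r < 1) (hs : 1 < s)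
    (hA : 0 < A) (hB : 0 < B) (hμ : 0 < μ)
    (G : ℝ → ℝ) (hG : ∀ t : ℝ, G t = A * t ^ (1 - r) - B * t ^ (s - r))
    (t₀ : ℝ) (ht₀ : t₀ = ((1 - r) * A / ((s - r) * B)) ^ (1 / (s - 1)))
    (hC0 : 0 < μ * C) (hCG : μ * C < G t₀)
    (F : ℝ → ℝ)
    (hF : ∀ t : ℝ, F t = t ^ (2 : ℝ) / 2 * A - μ * t ^ (r + 1) / (r + 1) * C -
      t ^ (s + 1) / (s + 1) * B) :
    ∃ tp tm : ℝ, 0 < tp ∧ tp < t₀ ∧ t₀ < tm ∧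
      G tp = μ * C ∧ G tm = μ * C ∧
      (∀ t : ℝ, 0 < t → G t = μ * C → t = tp ∨ t = tm) ∧
      0 < deriv G tp ∧ deriv G tm < 0 ∧
      deriv F tp = 0 ∧ deriv F tm = 0 ∧
      0 < deriv (deriv F) tp ∧ deriv (deriv F) tm < 0 :=
  stmt_5_general r s A B μ C hr0 hr1 hs hA hB G hG t₀ ht₀ hC0 hCG F hF
end

section
/- Let $r, s$ be reals with $0 \le r < 1 < s$ and let $K_g, K_h > 0$. Then there exists $\tilde\mu > 0$ such that for every $\mu \in (0, \tilde\mu)$ there do NOT exist real numbers $A > 0$, $B$, $C$ satisfying simultaneously: (i) $A = \mu C + B$; (ii) $2A = \mu(r+1)C + (s+1)B$; (iii) $B \le K_h A^{(s+1)/2}$; and (iv) $C \le K_g A^{(r+1)/2}$. -/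
/-- Lemma 5(i) (Lemma CL(i)), numerical content: for all sufficiently small `μ > 0`
the system expressing membership in `𝓜⁰_μ` together with the Hölder/Sobolev bounds
has no solution (i.e. `𝓜⁰_μ = ∅`). -/
theorem stmt_7 (r s Kg Kh : ℝ) (hr0 : 0 ≤ r) (hr1 : r < 1) (hs : 1 < s)
    (hKg : 0 < Kg) (hKh : 0 < Kh) :
    ∃ μt : ℝ, 0 < μt ∧ ∀ μ : ℝ, 0 < μ → μ < μt →
      ¬ ∃ A B C : ℝ, 0 < A ∧
        A = μ * C + B ∧
        2 * A = μ * (r + 1) * C + (s + 1) * B ∧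
        B ≤ Kh * A ^ ((s + 1) / 2) ∧
        C ≤ Kg * A ^ ((r + 1) / 2) := by
  have hsr : (0:ℝ) < s - r := by linarith
  have hs1 : (0:ℝ) < s - 1 := by linarith
  have h1r : (0:ℝ) < 1 - r := by linarith
  set d : ℝ := (1 - r) / ((s - r) * Kh) with hd
  have hdpos : 0 < d := by positivity
  set c0 : ℝ := d ^ (2 / (s - 1)) with hc0
  have hc0pos : 0 < c0 := Real.rpow_pos_of_pos hdpos _
  refine ⟨(s - 1) * c0 ^ ((1 - r) / 2) / ((s - r) * Kg), by positivity, ?_⟩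
  rintro μ hμ hμt ⟨A, B, C, hA, h1, h2, h3, h4⟩
  -- linear algebra consequences
  have hB : (s - r) * B = (1 - r) * A := by linear_combination (r + 1) * h1 - h2
  have hC : (s - r) * (μ * C) = (s - 1) * A := by linear_combination h2 - (s + 1) * h1
  -- split the powers
  have hsplit1 : A ^ ((s + 1) / 2) = A * A ^ ((s - 1) / 2) := by
    rw [show (s + 1) / 2 = 1 + (s - 1) / 2 by ring, Real.rpow_add hA, Real.rpow_one]
  rw [hsplit1] at h3
  have hsplit2 : A ^ (1:ℝ) = A ^ ((r + 1) / 2) * A ^ ((1 - r) / 2) := by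
    rw [← Real.rpow_add hA]; ring_nf
  rw [Real.rpow_one] at hsplit2
  have hp1 : 0 < A ^ ((s - 1) / 2) := Real.rpow_pos_of_pos hA _
  have hp2 : 0 < A ^ ((r + 1) / 2) := Real.rpow_pos_of_pos hA _
  have hp3 : 0 < A ^ ((1 - r) / 2) := Real.rpow_pos_of_pos hA _
  -- lower bound: d ≤ A ^ ((s-1)/2)
  have key1 : (1 - r) * A ≤ (s - r) * Kh * (A * A ^ ((s - 1) / 2)) := by
    calc (1 - r) * A = (s - r) * B := hB.symm
    _ ≤ (s - r) * (Kh * (A * A ^ ((s - 1) / 2))) := mul_le_mul_of_nonneg_left h3 hsr.le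
    _ = (s - r) * Kh * (A * A ^ ((s - 1) / 2)) := by ring
  have hdle : d ≤ A ^ ((s - 1) / 2) := by
    rw [hd, div_le_iff₀ (by positivity)]
    nlinarith [hA, key1]
  have hAc0 : c0 ≤ A := by
    have := Real.rpow_le_rpow hdpos.le hdle (by positivity : (0:ℝ) ≤ 2 / (s - 1))
    rwa [← Real.rpow_mul hA.le,
      show (s - 1) / 2 * (2 / (s - 1)) = 1 by field_simp, Real.rpow_one] at this
  -- upper bound from (iv)
  have key2 : (s - 1) * (A ^ ((r + 1) / 2) * A ^ ((1 - r) / 2))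
      ≤ (s - r) * (μ * Kg) * A ^ ((r + 1) / 2) := by
    calc (s - 1) * (A ^ ((r + 1) / 2) * A ^ ((1 - r) / 2)) = (s - 1) * A := by
          rw [← hsplit2]
    _ = (s - r) * (μ * C) := hC.symm
    _ ≤ (s - r) * (μ * (Kg * A ^ ((r + 1) / 2))) := by
        have := mul_le_mul_of_nonneg_left h4 hμ.le
        exact mul_le_mul_of_nonneg_left this hsr.le
    _ = (s - r) * (μ * Kg) * A ^ ((r + 1) / 2) := by ring
  have key2' : (s - 1) * A ^ ((1 - r) / 2) ≤ (s - r) * (μ * Kg) := by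
    refine le_of_mul_le_mul_right ?_ hp2
    nlinarith [key2]
  -- combine
  have hmono : c0 ^ ((1 - r) / 2) ≤ A ^ ((1 - r) / 2) :=
    Real.rpow_le_rpow hc0pos.le hAc0 (by positivity)
  rw [lt_div_iff₀ (by positivity)] at hμt
  nlinarith [key2', hmono, hμt]
end

section
/- Let $r, s$ be reals with $0 \le r < 1 < s$, let $\mu$ be real, and let $A > 0$, $B$, $C$ be real numbers satisfying $A = \mu C + B$ (the Nehari constraint) and $(s-r)B < (1-r)A$. Then $\frac{A}{2} - \frac{\mu C}{r+1} - \frac{B}{s+1} < \frac{(1-r)(1-s)}{2(1+r)(1+s)}\,A < 0$. -/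
/-! Eliminating `μC` through the constraint, the energy is
`(r - 1)/(2(r + 1)) · A + (s - r) B/((r + 1)(s + 1))`; bounding `(s - r) B` by `(1 - r) A`
leaves `(1 - r)/(r + 1) · (1/(s + 1) - 1/2) · A`, which is the claimed bound and is negative
because `s > 1`. -/

lemma energy_eq_of_nehari {r s μ A B C : ℝ} (hr : r + 1 ≠ 0) (hs : s + 1 ≠ 0)
    (hNehari : A = μ * C + B) :
    A / 2 - μ * C / (r + 1) - B / (s + 1) =
      (r - 1) / (2 * (r + 1)) * A + (s - r) * B / ((r + 1) * (s + 1)) := by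
  rw [show μ * C = A - B by linarith]
  field_simp
  ring

lemma energy_lt_of_nehari {r s μ A B C : ℝ} (hr : 0 < r + 1) (hs : 0 < s + 1)
    (hNehari : A = μ * C + B) (hplus : (s - r) * B < (1 - r) * A) :
    A / 2 - μ * C / (r + 1) - B / (s + 1) <
      (1 - r) * (1 - s) / (2 * (1 + r) * (1 + s)) * A :=
  calc A / 2 - μ * C / (r + 1) - B / (s + 1)
      = (r - 1) / (2 * (r + 1)) * A + (s - r) * B / ((r + 1) * (s + 1)) :=
        energy_eq_of_nehari hr.ne' hs.ne' hNehari
    _ < (r - 1) / (2 * (r + 1)) * A + (1 - r) * A / ((r + 1) * (s + 1)) := by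
        gcongr
    _ = (1 - r) * (1 - s) / (2 * (1 + r) * (1 + s)) * A := by
        rw [add_comm 1 r, add_comm 1 s]
        field_simp
        ring

lemma nehari_bound_neg {r s A : ℝ} (hr0 : -1 < r) (hr1 : r < 1) (hs : 1 < s) (hA : 0 < A) :
    (1 - r) * (1 - s) / (2 * (1 + r) * (1 + s)) * A < 0 := by
  have hnum : (1 - r) * (1 - s) < 0 := mul_neg_of_pos_of_neg (by linarith) (by linarith)
  have hden : 0 < 2 * (1 + r) * (1 + s) := by
    have : 0 < 1 + r := by linarith
    positivity
  exact mul_neg_of_neg_of_pos (div_neg_of_neg_of_pos hnum hden) hA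

/-- Lemma 5(iii) (Lemma CL(iii)), computation: on the Nehari constraint `A = μC + B`
with `(s-r)B < (1-r)A`, the energy is negative:
`A/2 - μC/(r+1) - B/(s+1) < (1-r)(1-s)/(2(1+r)(1+s)) · A < 0`. -/
theorem stmt_9 (r s μ A B C : ℝ) (hr0 : 0 ≤ r) (hr1 : r < 1) (hs : 1 < s)
    (hA : 0 < A)
    (hNehari : A = μ * C + B)
    (hplus : (s - r) * B < (1 - r) * A) :
    A / 2 - μ * C / (r + 1) - B / (s + 1) <
      (1 - r) * (1 - s) / (2 * (1 + r) * (1 + s)) * A ∧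
    (1 - r) * (1 - s) / (2 * (1 + r) * (1 + s)) * A < 0 :=
  ⟨energy_lt_of_nehari (by linarith) (by linarith) hNehari hplus,
    nehari_bound_neg (by linarith) hr1 hs hA⟩
end

section
/- Let $r, s$ be reals with $0 \le r < 1 < s$ and let $K_g, K_h > 0$. Set $\mu_0 = \frac{s-1}{s-r}\left(\frac{1-r}{s-r}\right)^{\frac{1-r}{s-1}} \frac{K_h^{-\frac{1-r}{s-1}}}{K_g}$. If $A > 0$, $0 < B \le K_h A^{(s+1)/2}$, $0 < C \le K_g A^{(r+1)/2}$ and $0 < \mu < \mu_0$, then $\mu C < G(t_0)$, where $G(t) = A t^{1-r} - B t^{s-r}$ and $t_0 = ((1-r)A/((s-r)B))^{1/(s-1)}$, i.e. $\mu C < \frac{s-1}{s-r}\left(\frac{1-r}{s-r}\right)^{\frac{1-r}{s-1}} A^{\frac{s-r}{s-1}} B^{-\frac{1-r}{s-1}}$. -/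
/-!
With `t₀ = (pA/(qB))^(1/(q-p))` one has `B t₀^q = (p/q) A t₀^p`, so
`G(t₀) = ((q-p)/q) A t₀^p`, which evaluates (here `p = 1 - r`, `q = s - r`) to the closed form on
the right. Raising `B ≤ K_h A^{(s+1)/2}` to the power `α = (1-r)/(s-1)` and multiplying by
`C ≤ K_g A^{(r+1)/2}` gives `C B^α ≤ K_g K_h^α A^{(s-r)/(s-1)}`, since
`α (s+1)/2 + (r+1)/2 = (s-r)/(s-1)`; this is exactly `μ₀ C ≤ G(t₀)`.
-/

open Real

theorem mul_rpow_sub_mul_rpow_at_critical_point {p q A B : ℝ} (hp : 0 < p) (hpq : p < q) (hA : 0 < A)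
    (hB : 0 < B) :
    A * ((p * A / (q * B)) ^ (1 / (q - p))) ^ p - B * ((p * A / (q * B)) ^ (1 / (q - p))) ^ q =
      (q - p) / q * (p / q) ^ (p / (q - p)) * A ^ (q / (q - p)) * B ^ (-(p / (q - p))) := by
  have hq : 0 < q := hp.trans hpq
  have hqp : q - p ≠ 0 := (sub_pos.2 hpq).ne'
  set x := p * A / (q * B)
  have hx : 0 < x := by positivity
  have htp : (x ^ (1 / (q - p))) ^ p = x ^ (p / (q - p)) := by
    rw [← rpow_mul hx.le]; congr 1; field_simp
  have htq : (x ^ (1 / (q - p))) ^ q = x * x ^ (p / (q - p)) := by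
    rw [← rpow_mul hx.le, ← rpow_one_add' hx.le (by positivity)]; congr 1; field_simp; ring
  have hxβ : x ^ (p / (q - p)) =
      (p / q) ^ (p / (q - p)) * A ^ (p / (q - p)) * B ^ (-(p / (q - p))) := by
    rw [show x = p / q * A * B⁻¹ by simp only [x]; field_simp,
      mul_rpow (by positivity) (inv_nonneg.2 hB.le), mul_rpow (by positivity) hA.le,
      inv_rpow hB.le, rpow_neg hB.le]
  have hAβ : A * A ^ (p / (q - p)) = A ^ (q / (q - p)) := by
    rw [← rpow_one_add' hA.le (by positivity)]; congr 1; field_simp; ring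
  rw [htp, htq, hxβ, ← hAβ]
  simp only [x]
  field_simp

theorem rpow_neg_div_mul_le_rpow_mul_rpow_neg {α a c Kg Kh A B C : ℝ} (hα : 0 ≤ α)
    (hKg : 0 < Kg) (hKh : 0 < Kh) (hA : 0 < A) (hB0 : 0 < B) (hB : B ≤ Kh * A ^ a)
    (hC : C ≤ Kg * A ^ c) :
    Kh ^ (-α) / Kg * C ≤ A ^ (α * a + c) * B ^ (-α) := by
  have hBα : B ^ α ≤ Kh ^ α * A ^ (α * a) := by
    calc B ^ α ≤ (Kh * A ^ a) ^ α := rpow_le_rpow hB0.le hB hα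
      _ = Kh ^ α * A ^ (α * a) := by
        rw [mul_rpow hKh.le (by positivity), ← rpow_mul hA.le, mul_comm a]
  have hCBα : C * B ^ α ≤ Kg * Kh ^ α * A ^ (α * a + c) :=
    calc C * B ^ α ≤ Kg * A ^ c * (Kh ^ α * A ^ (α * a)) :=
          mul_le_mul hC hBα (by positivity) (by positivity)
      _ = Kg * Kh ^ α * A ^ (α * a + c) := by rw [rpow_add hA]; ring
  rw [rpow_neg hKh.le, rpow_neg hB0.le, ← div_eq_mul_inv, inv_div_left,
    le_div_iff₀ (by positivity), inv_mul_eq_div, div_mul_eq_mul_div, div_le_iff₀ (by positivity)]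
  linarith

theorem stmt_10_general (r s Kg Kh : ℝ) (hr1 : r < 1) (hs : 1 < s)
    (hKg : 0 < Kg) (hKh : 0 < Kh)
    (μ₀ : ℝ)
    (hμ₀ : μ₀ = (s - 1) / (s - r) * ((1 - r) / (s - r)) ^ ((1 - r) / (s - 1)) *
      (Kh ^ (-((1 - r) / (s - 1))) / Kg))
    (A B C μ : ℝ) (hA : 0 < A)
    (hB0 : 0 < B) (hB : B ≤ Kh * A ^ ((s + 1) / 2))
    (hC0 : 0 < C) (hC : C ≤ Kg * A ^ ((r + 1) / 2))
    (hμμ₀ : μ < μ₀)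
    (G : ℝ → ℝ) (hG : ∀ t : ℝ, G t = A * t ^ (1 - r) - B * t ^ (s - r))
    (t₀ : ℝ) (ht₀ : t₀ = ((1 - r) * A / ((s - r) * B)) ^ (1 / (s - 1))) :
    μ * C < G t₀ ∧
    μ * C < (s - 1) / (s - r) * ((1 - r) / (s - r)) ^ ((1 - r) / (s - 1)) *
      A ^ ((s - r) / (s - 1)) * B ^ (-((1 - r) / (s - 1))) := by
  have hqp : s - r - (1 - r) = s - 1 := by ring
  have hGt₀ := mul_rpow_sub_mul_rpow_at_critical_point (sub_pos.2 hr1) (by linarith : 1 - r < s - r) hA hB0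
  rw [hqp] at hGt₀
  have hexp : (1 - r) / (s - 1) * ((s + 1) / 2) + (r + 1) / 2 = (s - r) / (s - 1) := by
    field_simp [(sub_pos.2 hs).ne']; ring
  have hCbound := rpow_neg_div_mul_le_rpow_mul_rpow_neg
    (div_pos (sub_pos.2 hr1) (sub_pos.2 hs)).le hKg hKh hA hB0 hB hC
  rw [hexp] at hCbound
  have hD : 0 ≤ (s - 1) / (s - r) * ((1 - r) / (s - r)) ^ ((1 - r) / (s - 1)) := by
    have hs1 := sub_pos.2 hs; have hsr := sub_pos.2 (hr1.trans hs); positivity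
  have hμC := calc μ * C < μ₀ * C := mul_lt_mul_of_pos_right hμμ₀ hC0
    _ = (s - 1) / (s - r) * ((1 - r) / (s - r)) ^ ((1 - r) / (s - 1)) *
        (Kh ^ (-((1 - r) / (s - 1))) / Kg * C) := by rw [hμ₀]; ring
    _ ≤ _ := mul_le_mul_of_nonneg_left hCbound hD
  rw [← mul_assoc] at hμC
  exact ⟨by rwa [hG, ht₀, hGt₀], hμC⟩

/-- Inequalities (2.5)–(2.8) in the proof of Lemma 4(b): below the explicit threshold
`μ₀`, the Hölder/Sobolev bounds force `μC < G(t₀)`. -/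
theorem stmt_10 (r s Kg Kh : ℝ) (hr0 : 0 ≤ r) (hr1 : r < 1) (hs : 1 < s)
    (hKg : 0 < Kg) (hKh : 0 < Kh)
    (μ₀ : ℝ)
    (hμ₀ : μ₀ = (s - 1) / (s - r) * ((1 - r) / (s - r)) ^ ((1 - r) / (s - 1)) *
      (Kh ^ (-((1 - r) / (s - 1))) / Kg))
    (A B C μ : ℝ) (hA : 0 < A)
    (hB0 : 0 < B) (hB : B ≤ Kh * A ^ ((s + 1) / 2))
    (hC0 : 0 < C) (hC : C ≤ Kg * A ^ ((r + 1) / 2))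
    (hμ : 0 < μ) (hμμ₀ : μ < μ₀)
    (G : ℝ → ℝ) (hG : ∀ t : ℝ, G t = A * t ^ (1 - r) - B * t ^ (s - r))
    (t₀ : ℝ) (ht₀ : t₀ = ((1 - r) * A / ((s - r) * B)) ^ (1 / (s - 1))) :
    μ * C < G t₀ ∧
    μ * C < (s - 1) / (s - r) * ((1 - r) / (s - r)) ^ ((1 - r) / (s - 1)) *
      A ^ ((s - r) / (s - 1)) * B ^ (-((1 - r) / (s - 1))) :=
  stmt_10_general r s Kg Kh hr1 hs hKg hKh μ₀ hμ₀ A B C μ hA hB0 hB hC0 hC hμμ₀ G hG t₀ ht₀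
end

section
/- Let $Q > 2$ be real, $s = \frac{Q+2}{Q-2}$, and let $S, C_1, C_2, C_3 > 0$. For $\epsilon > 0$ define $F_\epsilon(t) = \frac{S t^2}{2} - \frac{t^{1+s}}{1+s} + C_1 t^2 \epsilon^{Q-2} - C_2 t^{s} \epsilon^{\frac{Q-2}{2}} + C_3 t^{\frac{Q}{Q-2}} \epsilon^{\frac{Q}{2}}$ for $t \ge 0$. Then there exists $\epsilon_0 > 0$ such that for every $\epsilon \in (0, \epsilon_0)$, $\sup_{t \ge 0} F_\epsilon(t) < \frac{1}{Q} S^{Q/2}$. -/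
/-!
Young's inequality with exponents `p/2` and `p/(p-2)`, `p = 2Q/(Q-2)`, bounds the unperturbed
part `S t²/2 - t^p/p` by `S^(Q/2)/Q`. For `ε ≤ 1` the `ε`-terms are at most `C₁ t² + C₃ t^r`
(`r = Q/(Q-2)`), and the resulting majorant of `F ε` stays below half the threshold outside a
compact `[t₀, T] ⊂ (0, ∞)`: near `0` by continuity, near `∞` because `t^p` dominates. On
`[t₀, T]` the perturbation is at most `ε^((Q-2)/2) (C₁ T² ε^((Q-2)/2) + C₃ T^r ε - C₂ t₀^s)`,
negative for small `ε`, since the two positive terms carry an extra positive power of `ε`.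
-/

open Real Filter Topology Set

lemma mul_rpow_two_div_two_sub_rpow_div_le {p S t : ℝ} (hp : 2 < p) (hS : 0 ≤ S)
    (ht : 0 ≤ t) :
    S * t ^ (2 : ℝ) / 2 - t ^ p / p ≤ (1 / 2 - 1 / p) * S ^ (p / (p - 2)) := by
  have hconj : (p / 2).HolderConjugate (p / (p - 2)) := by
    rw [Real.holderConjugate_iff]
    refine ⟨by linarith, ?_⟩
    field_simp
    ring
  have hyoung := young_inequality_of_nonneg (rpow_nonneg ht 2) hS hconj
  rw [← rpow_mul ht, show 2 * (p / 2) = p by ring, div_div_eq_mul_div, div_div_eq_mul_div]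
    at hyoung
  have hp0 : p ≠ 0 := by linarith
  field_simp at hyoung ⊢
  linear_combination hyoung

lemma mul_rpow_two_div_two_sub_rpow_critical_le {Q S t : ℝ} (hQ : 2 < Q) (hS : 0 ≤ S)
    (ht : 0 ≤ t) :
    S * t ^ (2 : ℝ) / 2 - t ^ (2 * Q / (Q - 2)) / (2 * Q / (Q - 2)) ≤ 1 / Q * S ^ (Q / 2) := by
  have hQ₂ : Q - 2 ≠ 0 := by linarith
  have hp : 2 < 2 * Q / (Q - 2) := by
    rw [lt_div_iff₀ (by linarith)]; linarith
  have h := mul_rpow_two_div_two_sub_rpow_div_le hp hS ht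
  rwa [show 1 / 2 - 1 / (2 * Q / (Q - 2)) = 1 / Q by field_simp; ring,
    show 2 * Q / (Q - 2) / (2 * Q / (Q - 2) - 2) = Q / 2 by field_simp; ring] at h

lemma tendsto_mul_rpow_add_mul_rpow_sub_rpow_div_atBot {A B c q r p : ℝ} (hc : 0 < c)
    (hq : q < p) (hr : r < p) (hp : 0 < p) :
    Tendsto (fun t : ℝ ↦ A * t ^ q + B * t ^ r - t ^ p / c) atTop atBot := by
  have hfactor : Tendsto (fun t : ℝ ↦ A * t ^ (q - p) + B * t ^ (r - p) - c⁻¹) atTop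
      (𝓝 (-c⁻¹)) := by
    have hq' := (tendsto_rpow_neg_atTop (sub_pos.2 hq)).const_mul A
    have hr' := (tendsto_rpow_neg_atTop (sub_pos.2 hr)).const_mul B
    simpa using (hq'.add hr').sub_const c⁻¹
  refine ((tendsto_rpow_atTop hp).atTop_mul_neg (neg_lt_zero.2 (inv_pos.2 hc)) hfactor).congr' ?_
  filter_upwards [eventually_gt_atTop 0] with t ht
  have hsplit (x : ℝ) : t ^ p * t ^ (x - p) = t ^ x := by
    rw [← rpow_add ht, add_sub_cancel]
  rw [div_eq_mul_inv]
  linear_combination A * hsplit q + B * hsplit r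

lemma exists_forall_lt_of_continuousAt_zero_of_tendsto_atBot {g : ℝ → ℝ} {c : ℝ}
    (hg : ContinuousAt g 0) (hc : g 0 < c) (htop : Tendsto g atTop atBot) :
    ∃ t₀ > 0, ∃ T, ∀ t, 0 ≤ t → t ∉ Icc t₀ T → g t < c := by
  obtain ⟨t₀, ht₀, hsmall⟩ := Metric.eventually_nhds_iff.1 (hg.eventually (Iio_mem_nhds hc))
  obtain ⟨T, hlarge⟩ := eventually_atTop.1 (htop.eventually (eventually_lt_atBot c))
  refine ⟨t₀, ht₀, T, fun t ht hmid ↦ ?_⟩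
  rcases lt_or_ge t t₀ with h | h
  · exact hsmall (by rwa [Real.dist_eq, sub_zero, abs_of_nonneg ht])
  · exact hlarge t (le_of_lt (not_le.1 fun hT ↦ hmid ⟨h, hT⟩))

lemma exists_forall_mul_rpow_add_mul_rpow_sub_rpow_div_lt {A B K r p : ℝ} (hK : 0 < K)
    (hr₀ : 0 < r) (hr : r < p) (hp : 2 < p) :
    ∃ t₀ > 0, ∃ T, ∀ t, 0 ≤ t → t ∉ Icc t₀ T →
      A * t ^ (2 : ℝ) + B * t ^ r - t ^ p / p < K := by
  refine exists_forall_lt_of_continuousAt_zero_of_tendsto_atBot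
    (by fun_prop (disch := positivity)) ?_
    (tendsto_mul_rpow_add_mul_rpow_sub_rpow_div_atBot (by linarith) hp hr (by linarith))
  simpa [zero_rpow, hr₀.ne', (by linarith : p ≠ 0)] using hK

lemma eventually_lt_one_and_mul_rpow_add_mul_lt {A B a c : ℝ} (ha : 0 < a) (hc : 0 < c) :
    ∀ᶠ ε in 𝓝 (0 : ℝ), ε < 1 ∧ A * ε ^ a + B * ε < c := by
  refine (gt_mem_nhds one_pos).and ?_
  have hcont : ContinuousAt (fun ε : ℝ ↦ A * ε ^ a + B * ε) 0 := by
    fun_prop (disch := positivity)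
  refine hcont.eventually (gt_mem_nhds ?_)
  simpa [zero_rpow ha.ne'] using hc

lemma perturbation_le_of_le_one {Q C₁ C₂ C₃ s r ε t : ℝ} (hQ : 2 < Q) (hC₁ : 0 ≤ C₁)
    (hC₂ : 0 ≤ C₂) (hC₃ : 0 ≤ C₃) (hε : 0 ≤ ε) (hε₁ : ε ≤ 1) (ht : 0 ≤ t) :
    C₁ * t ^ (2 : ℝ) * ε ^ (Q - 2) - C₂ * t ^ s * ε ^ ((Q - 2) / 2) +
      C₃ * t ^ r * ε ^ (Q / 2) ≤ C₁ * t ^ (2 : ℝ) + C₃ * t ^ r := by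
  have h₁ : C₁ * t ^ (2 : ℝ) * ε ^ (Q - 2) ≤ C₁ * t ^ (2 : ℝ) :=
    mul_le_of_le_one_right (by positivity) (rpow_le_one hε hε₁ (by linarith))
  have h₃ : C₃ * t ^ r * ε ^ (Q / 2) ≤ C₃ * t ^ r :=
    mul_le_of_le_one_right (by positivity) (rpow_le_one hε hε₁ (by linarith))
  have h₂ : 0 ≤ C₂ * t ^ s * ε ^ ((Q - 2) / 2) := by positivity
  linarith

lemma perturbation_le_of_mem_Icc {Q C₁ C₂ C₃ s r ε t t₀ T : ℝ} (hC₁ : 0 ≤ C₁)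
    (hC₂ : 0 ≤ C₂) (hC₃ : 0 ≤ C₃) (hs : 0 ≤ s) (hr : 0 ≤ r) (hε : 0 < ε) (ht₀ : 0 ≤ t₀)
    (ht : t ∈ Icc t₀ T) :
    C₁ * t ^ (2 : ℝ) * ε ^ (Q - 2) - C₂ * t ^ s * ε ^ ((Q - 2) / 2) +
      C₃ * t ^ r * ε ^ (Q / 2) ≤
      ε ^ ((Q - 2) / 2) *
        (C₁ * T ^ (2 : ℝ) * ε ^ ((Q - 2) / 2) + C₃ * T ^ r * ε - C₂ * t₀ ^ s) := by
  have ht0 : 0 ≤ t := ht₀.trans ht.1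
  have hQ₂ : ε ^ (Q - 2) = ε ^ ((Q - 2) / 2) * ε ^ ((Q - 2) / 2) := by
    rw [← rpow_add hε]; ring_nf
  have hQ : ε ^ (Q / 2) = ε ^ ((Q - 2) / 2) * ε := by
    rw [← rpow_add_one hε.ne']; ring_nf
  have h₁ : t ^ (2 : ℝ) ≤ T ^ (2 : ℝ) := rpow_le_rpow ht0 ht.2 (by norm_num)
  have h₂ : t₀ ^ s ≤ t ^ s := rpow_le_rpow ht₀ ht.1 hs
  have h₃ : t ^ r ≤ T ^ r := rpow_le_rpow ht0 ht.2 hr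
  have hεa : 0 ≤ ε ^ ((Q - 2) / 2) := by positivity
  rw [hQ₂, hQ]
  have := mul_le_mul_of_nonneg_right (mul_le_mul_of_nonneg_left h₁ hC₁) (mul_nonneg hεa hεa)
  have := mul_le_mul_of_nonneg_right (mul_le_mul_of_nonneg_left h₂ hC₂) hεa
  have := mul_le_mul_of_nonneg_right (mul_le_mul_of_nonneg_left h₃ hC₃) (mul_nonneg hεa hε.le)
  linarith

/-- Quantitative heart of Lemma 9 (Lemma MPL): for all sufficiently small `ε > 0`,
`sup_{t ≥ 0} F_ε(t) < S^(Q/2)/Q`. -/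
theorem stmt_17 (Q S C₁ C₂ C₃ : ℝ) (hQ : 2 < Q) (hS : 0 < S)
    (hC₁ : 0 < C₁) (hC₂ : 0 < C₂) (hC₃ : 0 < C₃)
    (s : ℝ) (hs : s = (Q + 2) / (Q - 2))
    (F : ℝ → ℝ → ℝ)
    (hF : ∀ ε t : ℝ, F ε t = S * t ^ (2 : ℝ) / 2 - t ^ (1 + s) / (1 + s) +
      C₁ * t ^ (2 : ℝ) * ε ^ (Q - 2) - C₂ * t ^ s * ε ^ ((Q - 2) / 2) +
      C₃ * t ^ (Q / (Q - 2)) * ε ^ (Q / 2)) :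
    ∃ ε₀ : ℝ, 0 < ε₀ ∧ ∀ ε : ℝ, 0 < ε → ε < ε₀ →
      sSup (F ε '' Set.Ici 0) < 1 / Q * S ^ (Q / 2) := by
  have hQ₂ : 0 < Q - 2 := by linarith
  have hs₁ : 1 < s := by rw [hs, one_lt_div hQ₂]; linarith
  have hp : 1 + s = 2 * Q / (Q - 2) := by rw [hs]; field_simp; ring
  have hr₀ : 0 < Q / (Q - 2) := div_pos (by linarith) hQ₂
  have hr : Q / (Q - 2) < 1 + s := by
    rw [hp]; exact div_lt_div_of_pos_right (by linarith) hQ₂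
  set K := 1 / Q * S ^ (Q / 2)
  have hK : 0 < K := by positivity
  have hyoung (t : ℝ) (ht : 0 ≤ t) : S * t ^ (2 : ℝ) / 2 - t ^ (1 + s) / (1 + s) ≤ K := by
    rw [hp]; exact mul_rpow_two_div_two_sub_rpow_critical_le hQ hS.le ht
  obtain ⟨t₀, ht₀, T, hout⟩ := exists_forall_mul_rpow_add_mul_rpow_sub_rpow_div_lt
    (A := S / 2 + C₁) (B := C₃) (half_pos hK) hr₀ hr (by linarith)
  obtain ⟨ε₀, hε₀, hsmall⟩ := Metric.eventually_nhds_iff.1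
    (eventually_lt_one_and_mul_rpow_add_mul_lt (A := C₁ * T ^ (2 : ℝ))
      (B := C₃ * T ^ (Q / (Q - 2))) (half_pos hQ₂) (by positivity : 0 < C₂ * t₀ ^ s))
  refine ⟨ε₀, hε₀, fun ε hε hεε₀ ↦ ?_⟩
  obtain ⟨hε₁, hpert⟩ := hsmall (by rwa [Real.dist_eq, sub_zero, abs_of_pos hε])
  set η := C₁ * T ^ (2 : ℝ) * ε ^ ((Q - 2) / 2) + C₃ * T ^ (Q / (Q - 2)) * ε - C₂ * t₀ ^ s
  have hbound (t : ℝ) (ht : t ∈ Ici 0) :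
      F ε t ≤ max (K / 2) (K + ε ^ ((Q - 2) / 2) * η) := by
    rw [hF]
    by_cases hmid : t ∈ Icc t₀ T
    · linarith [le_max_right (K / 2) (K + ε ^ ((Q - 2) / 2) * η), hyoung t ht,
        perturbation_le_of_mem_Icc (Q := Q) (s := s) hC₁.le hC₂.le hC₃.le (by linarith) hr₀.le
          hε ht₀.le hmid]
    · linarith [le_max_left (K / 2) (K + ε ^ ((Q - 2) / 2) * η), hout t ht hmid,
        perturbation_le_of_le_one (s := s) (r := Q / (Q - 2)) hQ hC₁.le hC₂.le hC₃.le hε.le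
          hε₁.le ht]
  have hη : ε ^ ((Q - 2) / 2) * η < 0 := mul_neg_of_pos_of_neg (by positivity) (by linarith)
  calc sSup (F ε '' Ici 0) ≤ _ := csSup_le (nonempty_Ici.image _) (forall_mem_image.2 hbound)
    _ < K := max_lt (by linarith) (by linarith)
end
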